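/- If a matrix A ∈ ℝ^{n×N} satisfies the restricted isometry property with constant δ_{(a+1)k} < (a − γ²)/(a + γ²) for some a > 1 and γ ≥ 1, then A satisfies the null space property of order k with constant c₀ = 1 + √(1 + δ_{ak}) / (√a · √(1 − δ_{(a+1)k})): for every h in the null space of A and every index set T of size at most k, ‖h‖₁ ≤ c₀ ‖h restricted to the complement of T‖₁. -/

import Mathlib

open Matrix Finset

/-- `x` is `s`-sparse: at most `s` nonzero entries. -/
def IsSparse {N : ℕ} (s : ℕ) (x : Fin N → ℝ) : Prop :=
  (Finset.univ.filter (fun i => x i ≠ 0)).card ≤ s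

/-- `A` satisfies the RIP bounds with constant `δ` at sparsity level `s`. -/
def HasRIPBound {n N : ℕ} (A : Matrix (Fin n) (Fin N) ℝ) (s : ℕ) (δ : ℝ) : Prop :=
  ∀ x : Fin N → ℝ, IsSparse s x →
    (1 - δ) * (∑ i, (x i)^2) ≤ (∑ j, (A.mulVec x j)^2) ∧
      (∑ j, (A.mulVec x j)^2) ≤ (1 + δ) * (∑ i, (x i)^2)

/-!
Let `B` consist of the `ak` largest entries of `|h|` off `T`, and `U = T ∪ B`. Since `Ah = 0`,
`A h_U = -A h_{Uᶜ}`. Cutting `Uᶜ` into successive blocks of the next `ak` largest entries, every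
entry of a block is at most the average over the preceding block, so a block's `ℓ²` norm is at
most the preceding block's `ℓ¹` norm over `√(ak)`. The RIP on `U` and on the blocks then gives
`√(1 - δ_{(a+1)k}) ‖h_U‖₂ ≤ √(1 + δ_{ak}) ‖h_{Tᶜ}‖₁ / √(ak)`, and Cauchy–Schwarz
`‖h_T‖₁ ≤ √k ‖h_U‖₂` finishes the proof.
-/

open WithLp

section TopSubset

variable {ι : Type*} [DecidableEq ι]

def IsTopSubset (f : ι → ℝ) (m : ℕ) (S B : Finset ι) : Prop :=
  B ⊆ S ∧ #B = min m #S ∧ ∀ i ∈ S \ B, ∀ j ∈ B, f i ≤ f j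

/-- A subset of size `min m #S` maximizing `∑ f` cannot be improved by a swap. -/
lemma exists_isTopSubset (f : ι → ℝ) (m : ℕ) (S : Finset ι) : ∃ B, IsTopSubset f m S B := by
  obtain ⟨B, hB, hmax⟩ := exists_max_image (powersetCard (min m #S) S) (∑ i ∈ ·, f i)
    (powersetCard_nonempty.mpr (min_le_right _ _))
  obtain ⟨hBS, hBcard⟩ := mem_powersetCard.mp hB
  refine ⟨B, hBS, hBcard, fun i hi j hj => not_lt.mp fun hlt => ?_⟩
  obtain ⟨hiS, hiB⟩ := mem_sdiff.mp hi
  have hiB' : i ∉ B.erase j := fun h => hiB (mem_of_mem_erase h)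
  have hswap : insert i (B.erase j) ∈ powersetCard (min m #S) S := by
    refine mem_powersetCard.mpr ⟨insert_subset hiS ((erase_subset _ _).trans hBS), ?_⟩
    rw [card_insert_of_notMem hiB', card_erase_of_mem hj, hBcard]
    have : 0 < #B := card_pos.mpr ⟨j, hj⟩
    omega
  have := hmax _ hswap
  rw [sum_insert hiB', sum_erase_eq_sub hj] at this
  linarith

end TopSubset

/-- Every entry on `B'` is at most the average of `|h|` over `B`. -/
lemma sqrt_sum_sq_le_sum_abs_div_sqrt {ι : Type*} {h : ι → ℝ} {B B' : Finset ι} {m : ℕ}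
    (hm : 0 < m) (hB : #B = m) (hB' : #B' ≤ m) (hdom : ∀ i ∈ B', ∀ j ∈ B, |h i| ≤ |h j|) :
    √(∑ i ∈ B', h i ^ 2) ≤ (∑ j ∈ B, |h j|) / √m := by
  set s := ∑ j ∈ B, |h j|
  have hm' : (0 : ℝ) < m := by exact_mod_cast hm
  have hentry : ∀ i ∈ B', |h i| ≤ s / m := fun i hi => by
    rw [le_div_iff₀ hm', ← hB, mul_comm, ← nsmul_eq_mul, ← sum_const]
    exact sum_le_sum (hdom i hi)
  have hsq : ∑ i ∈ B', h i ^ 2 ≤ s ^ 2 / m :=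
    calc ∑ i ∈ B', h i ^ 2 ≤ ∑ _i ∈ B', (s / m) ^ 2 :=
          sum_le_sum fun i hi => by
            rw [← sq_abs]
            exact pow_le_pow_left₀ (abs_nonneg _) (hentry i hi) 2
      _ ≤ m * (s / m) ^ 2 := by
          rw [sum_const, nsmul_eq_mul]
          gcongr
      _ = s ^ 2 / m := by field_simp
  calc √(∑ i ∈ B', h i ^ 2) ≤ √(s ^ 2 / m) := Real.sqrt_le_sqrt hsq
    _ = s / √m := by
        rw [Real.sqrt_div' _ hm'.le, Real.sqrt_sq (sum_nonneg fun _ _ => abs_nonneg _)]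

lemma sum_abs_le_sqrt_card_mul_sqrt {ι : Type*} (h : ι → ℝ) (T : Finset ι) :
    ∑ i ∈ T, |h i| ≤ √(#T : ℝ) * √(∑ i ∈ T, h i ^ 2) := by
  rw [← Real.sqrt_mul (Nat.cast_nonneg _)]
  refine Real.le_sqrt_of_sq_le ?_
  simpa only [sq_abs] using sq_sum_le_card_mul_sum_sq (s := T) (f := fun i => |h i|)

lemma norm_toLp_two_indicator {ι : Type*} [Fintype ι] (h : ι → ℝ) (S : Finset ι) :
    ‖toLp 2 ((S : Set ι).indicator h)‖ = √(∑ i ∈ S, h i ^ 2) := by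
  rw [EuclideanSpace.norm_eq]
  simp only [Real.norm_eq_abs, sq_abs]
  rw [sum_indicator_subset_of_eq_zero h (fun _ x => x ^ 2) (subset_univ S)
    (fun _ => zero_pow two_ne_zero)]

lemma isSparse_indicator {N s : ℕ} (h : Fin N → ℝ) {S : Finset (Fin N)} (hS : #S ≤ s) :
    IsSparse s ((S : Set (Fin N)).indicator h) := by
  refine (card_le_card fun i hi => ?_).trans hS
  by_contra hiS
  exact (mem_filter.mp hi).2 (Set.indicator_of_notMem (by simpa using hiS) h)

namespace HasRIPBound

variable {n N : ℕ} {A : Matrix (Fin n) (Fin N) ℝ} {δ : ℝ}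

lemma norm_mulVec_le {s : ℕ} (hA : HasRIPBound A s δ) {x : Fin N → ℝ} (hx : IsSparse s x) :
    ‖toLp 2 (A *ᵥ x)‖ ≤ √(1 + δ) * ‖toLp 2 x‖ := by
  simp only [EuclideanSpace.norm_eq, Real.norm_eq_abs, sq_abs]
  rw [← Real.sqrt_mul' _ (sum_nonneg fun _ _ => sq_nonneg _)]
  exact Real.sqrt_le_sqrt (hA x hx).2

lemma le_norm_mulVec {s : ℕ} (hA : HasRIPBound A s δ) {x : Fin N → ℝ} (hx : IsSparse s x) :
    √(1 - δ) * ‖toLp 2 x‖ ≤ ‖toLp 2 (A *ᵥ x)‖ := by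
  simp only [EuclideanSpace.norm_eq, Real.norm_eq_abs, sq_abs]
  rw [← Real.sqrt_mul' _ (sum_nonneg fun _ _ => sq_nonneg _)]
  exact Real.sqrt_le_sqrt (hA x hx).1

/-- Strong induction on `S`: the top block `B'` of `S \ B` is dominated by `B`, and the rest of
`S \ B` is handled by the induction hypothesis. -/
theorem norm_mulVec_indicator_sdiff_le {m : ℕ} (hA : HasRIPBound A m δ) (hm : 0 < m)
    (h : Fin N → ℝ) (S B : Finset (Fin N)) (hB : IsTopSubset (|h ·|) m S B) :
    ‖toLp 2 (A *ᵥ (↑(S \ B) : Set (Fin N)).indicator h)‖ ≤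
      √(1 + δ) * (∑ i ∈ S, |h i|) / √m := by
  induction S using Finset.strongInduction generalizing B with
  | H S ih =>
  obtain ⟨hBS, hBcard, hdom⟩ := hB
  rcases le_or_gt #S m with hSm | hmS
  · have : S \ B = ∅ := by
      rw [sdiff_eq_empty_iff_subset]
      exact (eq_of_subset_of_card_le hBS (by omega)).ge
    rw [this, coe_empty, Set.indicator_empty', mulVec_zero, toLp_zero, norm_zero]
    positivity
  have hBm : #B = m := by omega
  obtain ⟨B', hB'⟩ := exists_isTopSubset (|h ·|) m (S \ B)
  have hB'm : #B' ≤ m := hB'.2.1 ▸ min_le_left _ _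
  have hsplit : (↑(S \ B) : Set (Fin N)).indicator h =
      (B' : Set (Fin N)).indicator h + (↑((S \ B) \ B') : Set (Fin N)).indicator h := by
    rw [coe_sdiff (S \ B), Set.indicator_sdiff (coe_subset.mpr hB'.1)]
    abel
  have hhead : ‖toLp 2 (A *ᵥ (B' : Set (Fin N)).indicator h)‖ ≤
      √(1 + δ) * ((∑ i ∈ B, |h i|) / √m) := by
    refine (hA.norm_mulVec_le (isSparse_indicator h hB'm)).trans ?_
    rw [norm_toLp_two_indicator]
    gcongr
    exact sqrt_sum_sq_le_sum_abs_div_sqrt hm hBm hB'm fun i hi j hj => hdom i (hB'.1 hi) j hj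
  calc ‖toLp 2 (A *ᵥ (↑(S \ B) : Set (Fin N)).indicator h)‖
      ≤ ‖toLp 2 (A *ᵥ (B' : Set (Fin N)).indicator h)‖ +
          ‖toLp 2 (A *ᵥ (↑((S \ B) \ B') : Set (Fin N)).indicator h)‖ := by
        rw [hsplit, mulVec_add, toLp_add]
        exact norm_add_le _ _
    _ ≤ √(1 + δ) * ((∑ i ∈ B, |h i|) / √m) + √(1 + δ) * (∑ i ∈ S \ B, |h i|) / √m :=
        add_le_add hhead (ih _ (sdiff_ssubset hBS (card_pos.mp (by omega))) B' hB')
    _ = √(1 + δ) * (∑ i ∈ S, |h i|) / √m := by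
        rw [← sum_sdiff hBS]
        ring

end HasRIPBound

theorem sum_abs_le_of_mulVec_eq_zero {n N k a : ℕ} {A : Matrix (Fin n) (Fin N) ℝ}
    {δak δa1k : ℝ} (ha : 0 < a) (hRIPak : HasRIPBound A (a * k) δak)
    (hRIPa1k : HasRIPBound A ((a + 1) * k) δa1k) (hδ : δa1k < 1) {h : Fin N → ℝ}
    (hAh : A *ᵥ h = 0) {T : Finset (Fin N)} (hT : #T ≤ k) :
    ∑ i ∈ T, |h i| ≤ √(1 + δak) / (√a * √(1 - δa1k)) * ∑ i ∈ Tᶜ, |h i| := by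
  rcases k.eq_zero_or_pos with rfl | hk
  · rw [card_eq_zero.mp (Nat.le_zero.mp hT), sum_empty]
    positivity
  obtain ⟨B, hB⟩ := exists_isTopSubset (|h ·|) (a * k) Tᶜ
  set U := T ∪ B
  have hUc : Tᶜ \ B = Uᶜ := by ext; simp [U]
  have hAU : A *ᵥ (U : Set (Fin N)).indicator h = -(A *ᵥ (↑Uᶜ : Set (Fin N)).indicator h) := by
    rw [eq_neg_iff_add_eq_zero, ← mulVec_add, coe_compl, Set.indicator_self_add_compl, hAh]
  have hUcard : #U ≤ (a + 1) * k := by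
    have : #B ≤ a * k := hB.2.1 ▸ min_le_left _ _
    calc #U ≤ #T + #B := card_union_le _ _
      _ ≤ (a + 1) * k := by nlinarith
  have hUnorm : √(1 - δa1k) * √(∑ i ∈ U, h i ^ 2) ≤
      √(1 + δak) * (∑ i ∈ Tᶜ, |h i|) / √((a * k : ℕ) : ℝ) :=
    calc √(1 - δa1k) * √(∑ i ∈ U, h i ^ 2)
        = √(1 - δa1k) * ‖toLp 2 ((U : Set (Fin N)).indicator h)‖ := by
          rw [norm_toLp_two_indicator]
      _ ≤ ‖toLp 2 (A *ᵥ (U : Set (Fin N)).indicator h)‖ :=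
          hRIPa1k.le_norm_mulVec (isSparse_indicator h hUcard)
      _ = ‖toLp 2 (A *ᵥ (↑(Tᶜ \ B) : Set (Fin N)).indicator h)‖ := by
          rw [hAU, hUc, toLp_neg, norm_neg]
      _ ≤ √(1 + δak) * (∑ i ∈ Tᶜ, |h i|) / √((a * k : ℕ) : ℝ) :=
          hRIPak.norm_mulVec_indicator_sdiff_le (by positivity) h _ _ hB
  have h1δ : 0 < √(1 - δa1k) := Real.sqrt_pos.mpr (by linarith)
  calc ∑ i ∈ T, |h i| ≤ √(k : ℝ) * √(∑ i ∈ T, h i ^ 2) := by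
        refine (sum_abs_le_sqrt_card_mul_sqrt h T).trans ?_
        gcongr
    _ ≤ √(k : ℝ) * √(∑ i ∈ U, h i ^ 2) := by
        gcongr
        exact subset_union_left
    _ ≤ √(k : ℝ) * (√(1 + δak) * (∑ i ∈ Tᶜ, |h i|) / √((a * k : ℕ) : ℝ) / √(1 - δa1k)) := by
        gcongr
        rw [le_div_iff₀ h1δ]
        linarith
    _ = √(1 + δak) / (√a * √(1 - δa1k)) * ∑ i ∈ Tᶜ, |h i| := by
        have : 0 < √(k : ℝ) := Real.sqrt_pos.mpr (by exact_mod_cast hk)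
        rw [Nat.cast_mul, Real.sqrt_mul (Nat.cast_nonneg _)]
        field_simp

theorem stmt_2_general {n N : ℕ} (A : Matrix (Fin n) (Fin N) ℝ) (k a : ℕ) (γ δak δa1k : ℝ)
    (ha : 1 < a)
    (hRIPak : HasRIPBound A (a * k) δak)
    (hRIPa1k : HasRIPBound A ((a + 1) * k) δa1k)
    (hδ : δa1k < ((a : ℝ) - γ^2) / ((a : ℝ) + γ^2)) :
    ∀ h : Fin N → ℝ, A.mulVec h = 0 → ∀ T : Finset (Fin N), T.card ≤ k →
      ∑ i, |h i| ≤
        (1 + Real.sqrt (1 + δak) / (Real.sqrt a * Real.sqrt (1 - δa1k))) *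
          ∑ i ∈ Tᶜ, |h i| := by
  intro h hAh T hT
  have hδ1 : δa1k < 1 := by
    refine hδ.trans_le (div_le_one_of_le₀ ?_ (by positivity))
    linarith [sq_nonneg γ]
  have hTbound := sum_abs_le_of_mulVec_eq_zero (by omega) hRIPak hRIPa1k hδ1 hAh hT
  rw [← sum_add_sum_compl T]
  linarith

/-- RIP implies the null space property of order `k` with constant
`c₀ = 1 + √(1+δ_{ak}) / (√a √(1-δ_{(a+1)k}))`. -/
theorem stmt_2 {n N : ℕ} (A : Matrix (Fin n) (Fin N) ℝ) (k a : ℕ) (γ δak δa1k : ℝ)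
    (ha : 1 < a) (hγ : 1 ≤ γ)
    (hδak0 : 0 ≤ δak) (hδa1k0 : 0 ≤ δa1k)
    (hRIPak : HasRIPBound A (a * k) δak)
    (hRIPa1k : HasRIPBound A ((a + 1) * k) δa1k)
    (hδ : δa1k < ((a : ℝ) - γ^2) / ((a : ℝ) + γ^2)) :
    ∀ h : Fin N → ℝ, A.mulVec h = 0 → ∀ T : Finset (Fin N), T.card ≤ k →
      ∑ i, |h i| ≤
        (1 + Real.sqrt (1 + δak) / (Real.sqrt a * Real.sqrt (1 - δa1k))) *
          ∑ i ∈ Tᶜ, |h i| :=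
  stmt_2_general A k a γ δak δa1k ha hRIPak hRIPa1k hδ
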